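/- Let Γ₁ = t₀ + t₁ ω̄∧ρ̄ + t₂ ρ̄∧W + t₃ ω̄∧T + t₄ T∧W + t₅ ω̄∧ρ̄∧T∧W + s₀ρ̄ + s₁ω̄ + s₂W + s₃ ρ̄∧T∧W + s₄ ω̄∧T∧W + s₅ ω̄∧ρ̄∧T be an element of the harmonic cohomology with |t₂| < 1 (here s_i are odd and t_i even parameters). Then Γ = Γ₁ - (s₀t₄/(1-t₂)) T - (s₀s₃/(1-t₂)) ρ̄∧T satisfies ∂̄Γ + (1/2)[Γ,Γ] = (i/2)(s₀²t₄/(1-t₂)) ω̄ + (i/2)(s₀²s₃/(1-t₂)) ω̄∧ρ̄ + i(s₀s₃²/(1-t₂)) ω̄∧ρ̄∧T∧W - (i/2)(s₀²t₄s₃/(1-t₂)²) ω̄∧T, i.e. ∂̄Γ + ∂⃗Γ + (1/2)[Γ,Γ] = 0 with the Chen vector field ∂⃗ as given in the paper. -/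

import Mathlib

/-- A (differential) Gerstenhaber algebra structure on a `ℂ`-algebra `F` whose
multiplication plays the role of the wedge product: an `ℕ`-grading `gr`, an odd
Schouten bracket `br` and a differential `D` satisfying the axioms (L1)-(L3),
(C1)-(C3) and (D1)-(D4) in their sign-explicit forms. -/
structure GA (F : Type*) [Ring F] [Algebra ℂ F] where
  gr : ℕ → Submodule ℂ F
  br : F →ₗ[ℂ] F →ₗ[ℂ] F
  D : F →ₗ[ℂ] F
  one_mem : (1 : F) ∈ gr 0
  mul_mem : ∀ {i j : ℕ} {a b : F}, a ∈ gr i → b ∈ gr j → a * b ∈ gr (i + j)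
  br_mem : ∀ {i j : ℕ} {a b : F}, a ∈ gr i → b ∈ gr j → br a b ∈ gr (i + j - 1)
  D_mem : ∀ {i : ℕ} {a : F}, a ∈ gr i → D a ∈ gr (i + 1)
  gcomm : ∀ {i j : ℕ} {a b : F}, a ∈ gr i → b ∈ gr j →
    a * b = ((-1 : ℂ) ^ (i * j)) • (b * a)
  br_symm : ∀ {i j : ℕ} {a b : F}, a ∈ gr i → b ∈ gr j →
    br a b = ((-1 : ℂ) ^ (i * j + i + j)) • br b a
  leibniz : ∀ {i j : ℕ} {a b : F} (c : F), a ∈ gr i → b ∈ gr j →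
    br (a * b) c = a * br b c + ((-1 : ℂ) ^ (i * j)) • (b * br a c)
  leibniz' : ∀ {i j : ℕ} {a b : F} (c : F), a ∈ gr i → b ∈ gr j →
    br a (b * c) = br a b * c + ((-1 : ℂ) ^ (j + i * j)) • (b * br a c)
  D_mul : ∀ {i : ℕ} {a : F} (b : F), a ∈ gr i →
    D (a * b) = D a * b + ((-1 : ℂ) ^ i) • (a * D b)
  D_D : ∀ a : F, D (D a) = 0
  D_br : ∀ {i : ℕ} {a : F} (b : F), a ∈ gr i →
    D (br a b) = br (D a) b - ((-1 : ℂ) ^ i) • br a (D b)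

/-- The differential Gerstenhaber algebra of the Kodaira surface: it is generated
as an exterior algebra by the degree-one elements `T, W, ρ̄, ω̄`; the sole nonzero
Schouten bracket among degree-one elements is `[T, ρ̄] = -(i/2) ω̄`, and the
differential is determined by `∂̄T = -(i/2) ω̄∧W` and zero on the other generators. -/
structure KodairaGA (F : Type*) [Ring F] [Algebra ℂ F] extends GA F where
  T : F
  W : F
  ρ : F
  ω : F
  T_mem : T ∈ gr 1
  W_mem : W ∈ gr 1
  ρ_mem : ρ ∈ gr 1
  ω_mem : ω ∈ gr 1
  br_T_ρ : br T ρ = (-(Complex.I)/2) • ω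
  br_T_T : br T T = 0
  br_T_W : br T W = 0
  br_T_ω : br T ω = 0
  br_W_W : br W W = 0
  br_W_ρ : br W ρ = 0
  br_W_ω : br W ω = 0
  br_ρ_ρ : br ρ ρ = 0
  br_ρ_ω : br ρ ω = 0
  br_ω_ω : br ω ω = 0
  D_T : D T = (-(Complex.I)/2) • (ω * W)
  D_W : D W = 0
  D_ρ : D ρ = 0
  D_ω : D ω = 0


/-!
Write `Γ = C + ρ̄ P + T Q + ρ̄ T R` with `C, P, Q, R` in the subalgebra generated by `ω̄`, `W` and
the odd parameters, `P, Q` odd and `R` even. These coefficients bracket trivially with all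
generators and are `∂̄`-closed, so only `[T, ρ̄] = -(i/2) ω̄` and `∂̄T = -(i/2) ω̄∧W` contribute,
and the Leibniz rules give
`∂̄Γ + ½[Γ,Γ] = (i/2) ω̄ ((P - W) Q + ρ̄ (P - W) R + T Q R + ρ̄ T R R)`.
After left multiplication by `ω̄`, the elements `P - W`, `Q`, `R` become `ω̄ X`,
`-(t₄/(1-t₂)) ω̄ X` and `(1/(1-t₂)) ω̄ X s₃` with `X = (t₂ - 1) W - s₀`: this is what the two
correction terms of `Γ` are for. Every term then contains the odd element `X` twice, so the
left-hand side vanishes; so does the right-hand side, because `s₀² = s₃² = 0`.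
-/

namespace GA

variable {F : Type*} [Ring F] [Algebra ℂ F] (A : GA F)

theorem br_one_left (c : F) : A.br 1 c = 0 := by
  simpa using A.leibniz c A.one_mem A.one_mem

theorem br_one_right {i : ℕ} {a : F} (ha : a ∈ A.gr i) : A.br a 1 = 0 := by
  simpa using A.leibniz' 1 ha A.one_mem

theorem D_one : A.D 1 = 0 := by
  simpa using A.D_mul 1 A.one_mem

theorem br_mul_right_of_mem_gr_one {j : ℕ} {a b : F} (c : F) (ha : a ∈ A.gr 1)
    (hb : b ∈ A.gr j) : A.br a (b * c) = A.br a b * c + b * A.br a c := by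
  rw [A.leibniz' c ha hb, one_mul, ← two_mul, pow_mul, neg_one_sq, one_pow, one_smul]

theorem D_mul_of_mem_gr_one {a : F} (b : F) (ha : a ∈ A.gr 1) :
    A.D (a * b) = A.D a * b - a * A.D b := by
  rw [A.D_mul b ha, pow_one, neg_one_smul, sub_eq_add_neg]

theorem br_anticomm {a b : F} (ha : a ∈ A.gr 1) (hb : b ∈ A.gr 1) : A.br a b = -A.br b a := by
  rw [A.br_symm ha hb]
  norm_num

def homogeneous : Submonoid F where
  carrier := {x | ∃ k, x ∈ A.gr k}
  one_mem' := ⟨0, A.one_mem⟩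
  mul_mem' := fun ⟨_, ha⟩ ⟨_, hb⟩ => ⟨_, A.mul_mem ha hb⟩

theorem br_eq_zero_of_mem_closure {S S' : Set F} (hS : S ⊆ A.homogeneous)
    (hS' : S' ⊆ A.homogeneous) (h : ∀ s ∈ S, ∀ s' ∈ S', A.br s s' = 0) {x y : F}
    (hx : x ∈ Submonoid.closure S) (hy : y ∈ Submonoid.closure S') : A.br x y = 0 := by
  induction hx using Submonoid.closure_induction with
  | mem s hs =>
    obtain ⟨_, hs_gr⟩ := hS hs
    induction hy using Submonoid.closure_induction with
    | mem s' hs' => exact h s hs s' hs'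
    | one => exact A.br_one_right hs_gr
    | mul a b ha _ iha ihb =>
      obtain ⟨_, ha⟩ := Submonoid.closure_le.2 hS' ha
      rw [A.leibniz' b hs_gr ha, iha, ihb]
      simp
  | one => exact A.br_one_left y
  | mul a b ha hb iha ihb =>
    obtain ⟨_, ha⟩ := Submonoid.closure_le.2 hS ha
    obtain ⟨_, hb⟩ := Submonoid.closure_le.2 hS hb
    rw [A.leibniz y ha hb, iha, ihb]
    simp

theorem br_eq_zero_of_mem_adjoin {S S' : Set F} (hS : S ⊆ A.homogeneous)
    (hS' : S' ⊆ A.homogeneous) (h : ∀ s ∈ S, ∀ s' ∈ S', A.br s s' = 0) {x y : F}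
    (hx : x ∈ Algebra.adjoin ℂ S) (hy : y ∈ Algebra.adjoin ℂ S') : A.br x y = 0 := by
  rw [← Subalgebra.mem_toSubmodule, Algebra.adjoin_eq_span] at hx hy
  induction hx using Submodule.span_induction with
  | mem x hx =>
    induction hy using Submodule.span_induction with
    | mem y hy => exact A.br_eq_zero_of_mem_closure hS hS' h hx hy
    | zero => simp
    | add _ _ _ _ h₁ h₂ => simp [h₁, h₂]
    | smul _ _ _ h₁ => simp [h₁]
  | zero => simp
  | add _ _ _ _ h₁ h₂ => simp [h₁, h₂]
  | smul _ _ _ h₁ => simp [h₁]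

theorem D_eq_zero_of_mem_adjoin {S : Set F} (hS : S ⊆ A.homogeneous) (h : ∀ s ∈ S, A.D s = 0)
    {x : F} (hx : x ∈ Algebra.adjoin ℂ S) : A.D x = 0 := by
  rw [← Subalgebra.mem_toSubmodule, Algebra.adjoin_eq_span] at hx
  induction hx using Submodule.span_induction with
  | mem x hx =>
    induction hx using Submonoid.closure_induction with
    | mem s hs => exact h s hs
    | one => exact A.D_one
    | mul a b ha _ iha ihb =>
      obtain ⟨_, ha⟩ := Submonoid.closure_le.2 hS ha
      rw [A.D_mul b ha, iha, ihb]
      simp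
  | zero => simp
  | add _ _ _ _ h₁ h₂ => simp [h₁, h₂]
  | smul _ _ _ h₁ => simp [h₁]

def superGr (i : ℕ) : Submodule ℂ F := ⨆ k, A.gr (2 * k + i)

theorem gr_le_superGr (k i : ℕ) : A.gr (2 * k + i) ≤ A.superGr i :=
  le_iSup (fun k => A.gr (2 * k + i)) k

theorem mem_superGr_of_mem_gr {i : ℕ} {a : F} (ha : a ∈ A.gr i) : a ∈ A.superGr i :=
  A.gr_le_superGr 0 i (by simpa using ha)

private theorem neg_one_pow_parity (k l i j : ℕ) :
    (-1 : ℂ) ^ ((2 * k + i) * (2 * l + j)) = (-1) ^ (i * j) := by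
  rw [show (2 * k + i) * (2 * l + j) = i * j + 2 * (2 * k * l + k * j + i * l) by ring,
    pow_add, pow_mul]
  simp

theorem superGr_induction₂ {i j : ℕ} {p : F → F → Prop} {a b : F} (ha : a ∈ A.superGr i)
    (hb : b ∈ A.superGr j) (hom : ∀ k l a b, a ∈ A.gr (2 * k + i) → b ∈ A.gr (2 * l + j) → p a b)
    (zero_left : ∀ b, p 0 b) (zero_right : ∀ a, p a 0)
    (add_left : ∀ a₁ a₂ b, p a₁ b → p a₂ b → p (a₁ + a₂) b)
    (add_right : ∀ a b₁ b₂, p a b₁ → p a b₂ → p a (b₁ + b₂)) : p a b := by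
  induction ha using Submodule.iSup_induction' with
  | mem k a ha =>
    induction hb using Submodule.iSup_induction' with
    | mem l b hb => exact hom k l a b ha hb
    | zero => exact zero_right a
    | add _ _ _ _ h₁ h₂ => exact add_right _ _ _ h₁ h₂
  | zero => exact zero_left b
  | add _ _ _ _ h₁ h₂ => exact add_left _ _ _ h₁ h₂

theorem mul_mem_superGr {i j : ℕ} {a b : F} (ha : a ∈ A.superGr i) (hb : b ∈ A.superGr j) :
    a * b ∈ A.superGr (i + j) := by
  refine A.superGr_induction₂ (p := fun a b => a * b ∈ A.superGr (i + j)) ha hb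
    (fun k l a b ha hb => A.gr_le_superGr (k + l) (i + j) ?_) (by simp) (by simp)
    (fun _ _ _ h₁ h₂ => by simpa [add_mul] using add_mem h₁ h₂)
    (fun _ _ _ h₁ h₂ => by simpa [mul_add] using add_mem h₁ h₂)
  convert A.mul_mem ha hb using 2
  ring

theorem mul_comm_superGr {i j : ℕ} {a b : F} (ha : a ∈ A.superGr i) (hb : b ∈ A.superGr j) :
    a * b = (-1 : ℂ) ^ (i * j) • (b * a) :=
  A.superGr_induction₂ (p := fun a b => a * b = (-1 : ℂ) ^ (i * j) • (b * a)) ha hb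
    (fun k l _ _ ha hb => by rw [A.gcomm ha hb, neg_one_pow_parity]) (by simp) (by simp)
    (fun _ _ _ h₁ h₂ => by simp [add_mul, mul_add, h₁, h₂])
    (fun _ _ _ h₁ h₂ => by simp [add_mul, mul_add, h₁, h₂])

theorem mul_comm_of_even {j : ℕ} {a b : F} (ha : a ∈ A.superGr 0) (hb : b ∈ A.superGr j) :
    a * b = b * a := by
  simpa using A.mul_comm_superGr ha hb

theorem mul_anticomm_of_odd {a b : F} (ha : a ∈ A.superGr 1) (hb : b ∈ A.superGr 1) :
    a * b = -(b * a) := by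
  simpa using A.mul_comm_superGr ha hb

theorem mul_left_comm_of_even {j : ℕ} {a b : F} (ha : a ∈ A.superGr 0) (hb : b ∈ A.superGr j)
    (x : F) : a * (b * x) = b * (a * x) := by
  rw [← mul_assoc, A.mul_comm_of_even ha hb, mul_assoc]

theorem mul_left_anticomm_of_odd {a b : F} (ha : a ∈ A.superGr 1) (hb : b ∈ A.superGr 1)
    (x : F) : a * (b * x) = -(b * (a * x)) := by
  rw [← mul_assoc, A.mul_anticomm_of_odd ha hb, neg_mul, mul_assoc]

theorem mul_self_eq_zero_of_odd {a : F} (ha : a ∈ A.superGr 1) : a * a = 0 := by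
  have h := A.mul_anticomm_of_odd ha ha
  rw [eq_neg_iff_add_eq_zero, ← two_smul ℂ] at h
  exact (smul_eq_zero.1 h).resolve_left two_ne_zero

theorem br_mul_left_superGr {i j : ℕ} {a b : F} (c : F) (ha : a ∈ A.superGr i)
    (hb : b ∈ A.superGr j) :
    A.br (a * b) c = a * A.br b c + (-1 : ℂ) ^ (i * j) • (b * A.br a c) :=
  A.superGr_induction₂
    (p := fun a b => A.br (a * b) c = a * A.br b c + (-1 : ℂ) ^ (i * j) • (b * A.br a c)) ha hb
    (fun k l _ _ ha hb => by rw [A.leibniz c ha hb, neg_one_pow_parity]) (by simp) (by simp)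
    (fun _ _ _ h₁ h₂ => by
      simp only [add_mul, map_add, LinearMap.add_apply, mul_add, smul_add, h₁, h₂]; abel)
    (fun _ _ _ h₁ h₂ => by
      simp only [mul_add, add_mul, map_add, LinearMap.add_apply, smul_add, h₁, h₂]; abel)

theorem br_mul_left_of_odd {a b : F} (c : F) (ha : a ∈ A.superGr 1) (hb : b ∈ A.superGr 1) :
    A.br (a * b) c = a * A.br b c - b * A.br a c := by
  rw [A.br_mul_left_superGr c ha hb, mul_one, pow_one, neg_one_smul, sub_eq_add_neg]

theorem br_mul_left_of_even {i : ℕ} {a b : F} (c : F) (ha : a ∈ A.superGr i)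
    (hb : b ∈ A.superGr 0) : A.br (a * b) c = a * A.br b c + b * A.br a c := by
  rw [A.br_mul_left_superGr c ha hb, mul_zero, pow_zero, one_smul]

end GA

namespace KodairaGA

open Complex

variable {F : Type*} [Ring F] [Algebra ℂ F] (K : KodairaGA F)

theorem T_mem_superGr : K.T ∈ K.superGr 1 := K.mem_superGr_of_mem_gr K.T_mem

theorem W_mem_superGr : K.W ∈ K.superGr 1 := K.mem_superGr_of_mem_gr K.W_mem

theorem ρ_mem_superGr : K.ρ ∈ K.superGr 1 := K.mem_superGr_of_mem_gr K.ρ_mem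

theorem ω_mem_superGr : K.ω ∈ K.superGr 1 := K.mem_superGr_of_mem_gr K.ω_mem

theorem ω_mul_ω_mul (x : F) : K.ω * (K.ω * x) = 0 := by
  rw [← mul_assoc, K.mul_self_eq_zero_of_odd K.ω_mem_superGr, zero_mul]

theorem br_ρ_T : K.br K.ρ K.T = (I / 2) • K.ω := by
  rw [K.br_anticomm K.ρ_mem K.T_mem, K.br_T_ρ, ← neg_smul, neg_div, neg_neg]

theorem br_eq_zero_of_mem_gens {S : Set F}
    (hS : ∀ s ∈ S, (∀ x : F, K.br s x = 0) ∧ (∀ x : F, K.br x s = 0) ∧ K.D s = 0) {s g : F}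
    (hs : s ∈ insert K.ω (insert K.W S))
    (hg : g ∈ insert K.T (insert K.ρ (insert K.ω (insert K.W S)))) :
    K.br s g = 0 ∧ K.br g s = 0 := by
  rcases hs with rfl | rfl | hs
  all_goals first
    | exact ⟨(hS s hs).1 g, (hS s hs).2.1 g⟩
    | rcases hg with rfl | rfl | rfl | rfl | hg
  all_goals first
    | exact ⟨(hS g hg).2.1 _, (hS g hg).1 _⟩
    | simp [K.br_anticomm K.ω_mem K.T_mem, K.br_anticomm K.ω_mem K.ρ_mem,
        K.br_anticomm K.ω_mem K.W_mem, K.br_anticomm K.W_mem K.T_mem,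
        K.br_anticomm K.ρ_mem K.W_mem, K.br_T_ω, K.br_ρ_ω, K.br_ω_ω, K.br_W_ω, K.br_T_W, K.br_W_ρ,
        K.br_W_W]

section Decomposition

variable {C P Q R Γ : F}

theorem br_T_of_decomp (hΓ : Γ = C + K.ρ * P + K.T * Q + K.ρ * (K.T * R))
    (h : ∀ z ∈ ({C, P, Q, R} : Set F), K.br K.T z = 0) :
    K.br K.T Γ = -(I / 2) • (K.ω * P + K.ω * (K.T * R)) := by
  simp only [Set.mem_insert_iff, Set.mem_singleton_iff, forall_eq_or_imp, forall_eq] at h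
  obtain ⟨hC, hP, hQ, hR⟩ := h
  simp only [hΓ, map_add, K.br_mul_right_of_mem_gr_one _ K.T_mem K.ρ_mem,
    K.br_mul_right_of_mem_gr_one _ K.T_mem K.T_mem,
    K.br_T_ρ, K.br_T_T, hC, hP, hQ, hR, smul_mul_assoc, mul_zero, zero_mul, add_zero, zero_add]
  module

theorem br_ρ_of_decomp (hΓ : Γ = C + K.ρ * P + K.T * Q + K.ρ * (K.T * R))
    (h : ∀ z ∈ ({C, P, Q, R} : Set F), K.br K.ρ z = 0) :
    K.br K.ρ Γ = (I / 2) • (K.ω * Q + K.ρ * (K.ω * R)) := by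
  simp only [Set.mem_insert_iff, Set.mem_singleton_iff, forall_eq_or_imp, forall_eq] at h
  obtain ⟨hC, hP, hQ, hR⟩ := h
  simp only [hΓ, map_add, K.br_mul_right_of_mem_gr_one _ K.ρ_mem K.ρ_mem,
    K.br_mul_right_of_mem_gr_one _ K.ρ_mem K.T_mem, K.br_ρ_T, K.br_ρ_ρ, hC, hP, hQ, hR,
    smul_mul_assoc, mul_smul_comm, mul_zero, zero_mul, add_zero, zero_add]
  module

theorem br_self_of_decomp (hΓ : Γ = C + K.ρ * P + K.T * Q + K.ρ * (K.T * R))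
    (hP : P ∈ K.superGr 1) (hQ : Q ∈ K.superGr 1) (hR : R ∈ K.superGr 0)
    (h : ∀ z ∈ ({C, P, Q, R} : Set F), K.br z Γ = 0) :
    K.br Γ Γ = -(P * K.br K.ρ Γ) - Q * K.br K.T Γ + K.ρ * (R * K.br K.T Γ)
      - K.T * (R * K.br K.ρ Γ) := by
  simp only [Set.mem_insert_iff, Set.mem_singleton_iff, forall_eq_or_imp, forall_eq] at h
  obtain ⟨hC, hP', hQ', hR'⟩ := h
  conv_lhs => arg 1; rw [hΓ]
  have hTR := K.mul_mem_superGr K.T_mem_superGr hR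
  simp only [map_add, LinearMap.add_apply, K.br_mul_left_of_odd _ K.ρ_mem_superGr hP,
    K.br_mul_left_of_odd _ K.T_mem_superGr hQ, K.br_mul_left_of_odd _ K.ρ_mem_superGr hTR,
    K.br_mul_left_of_even _ K.T_mem_superGr hR, hC, hP', hQ', hR', mul_zero, zero_add, mul_assoc]
  abel

theorem D_of_decomp (hΓ : Γ = C + K.ρ * P + K.T * Q + K.ρ * (K.T * R))
    (h : ∀ z ∈ ({C, P, Q, R} : Set F), K.D z = 0) :
    K.D Γ = -(I / 2) • (K.ω * K.W * Q) + (I / 2) • (K.ρ * (K.ω * K.W * R)) := by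
  simp only [Set.mem_insert_iff, Set.mem_singleton_iff, forall_eq_or_imp, forall_eq] at h
  obtain ⟨hC, hP, hQ, hR⟩ := h
  simp only [hΓ, map_add, K.D_mul_of_mem_gr_one _ K.ρ_mem, K.D_mul_of_mem_gr_one _ K.T_mem,
    K.D_T, K.D_ρ, hC, hP, hQ, hR, smul_mul_assoc, mul_smul_comm, mul_zero, zero_mul, sub_zero,
    zero_sub, zero_add]
  module

theorem D_add_half_br_self_of_decomp (hΓ : Γ = C + K.ρ * P + K.T * Q + K.ρ * (K.T * R))
    (hP : P ∈ K.superGr 1) (hQ : Q ∈ K.superGr 1) (hR : R ∈ K.superGr 0)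
    (h : ∀ z ∈ ({C, P, Q, R} : Set F),
      K.br K.T z = 0 ∧ K.br K.ρ z = 0 ∧ K.br z Γ = 0 ∧ K.D z = 0) :
    K.D Γ + (1 / 2 : ℂ) • K.br Γ Γ = (I / 2) • (K.ω * ((P - K.W) * Q
      + K.ρ * ((P - K.W) * R) + K.T * (Q * R) + K.ρ * (K.T * (R * R)))) := by
  rw [K.D_of_decomp hΓ fun z hz => (h z hz).2.2.2,
    K.br_self_of_decomp hΓ hP hQ hR fun z hz => (h z hz).2.2.1,
    K.br_T_of_decomp hΓ fun z hz => (h z hz).1, K.br_ρ_of_decomp hΓ fun z hz => (h z hz).2.1]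
  have hω := K.ω_mem_superGr
  have hρ := K.ρ_mem_superGr
  have hT := K.T_mem_superGr
  -- normal-order every monomial as `ω, ρ, T, P, Q, R`
  simp only [mul_add, mul_sub, sub_mul, mul_smul_comm, smul_add, smul_sub, mul_neg, smul_neg,
    mul_assoc, K.mul_left_anticomm_of_odd hρ hω, K.mul_left_anticomm_of_odd hT hω,
    K.mul_left_anticomm_of_odd hP hω, K.mul_left_comm_of_even hR hω,
    K.mul_left_anticomm_of_odd hQ hω, K.mul_left_anticomm_of_odd hT hρ,
    K.mul_left_anticomm_of_odd hP hρ, K.mul_left_comm_of_even hR hρ,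
    K.mul_left_anticomm_of_odd hQ hT, K.mul_left_comm_of_even hR hT,
    K.mul_anticomm_of_odd hQ hP, K.mul_comm_of_even hR hP, K.mul_comm_of_even hR hQ]
  module

end Decomposition

theorem ω_mul_residue_eq_zero {P Q R X Y : F} {α β : ℂ} (hX : X ∈ K.superGr 1)
    (hY : Y ∈ K.superGr 1) (hR : R ∈ K.superGr 0) (hωP : K.ω * (P - K.W) = K.ω * X)
    (hωQ : K.ω * Q = α • (K.ω * X)) (hωR : K.ω * R = β • (K.ω * (X * Y))) :
    K.ω * ((P - K.W) * Q + K.ρ * ((P - K.W) * R) + K.T * (Q * R) + K.ρ * (K.T * (R * R))) = 0 := by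
  have hω := K.ω_mem_superGr
  have hXX : X * X = 0 := K.mul_self_eq_zero_of_odd hX
  have hXQ : K.ω * (X * Q) = 0 := by
    rw [K.mul_left_anticomm_of_odd hω hX, hωQ, mul_smul_comm, K.mul_left_anticomm_of_odd hX hω, hXX]
    simp
  have hXR : K.ω * (X * R) = 0 := by
    rw [← K.mul_comm_of_even hR hX, ← mul_assoc, hωR, smul_mul_assoc, mul_assoc, mul_assoc,
      K.mul_anticomm_of_odd hY hX, mul_neg, ← mul_assoc X X, hXX]
    simp
  have hQR : K.ω * (Q * R) = 0 := by
    rw [← mul_assoc, hωQ, smul_mul_assoc, mul_assoc, hXR, smul_zero]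
  have hRR : K.ω * (R * R) = 0 := by
    rw [← mul_assoc, hωR, smul_mul_assoc, mul_assoc, mul_assoc, ← K.mul_comm_of_even hR hY,
      ← mul_assoc X, ← mul_assoc, hXR, zero_mul, smul_zero]
  simp only [mul_add, K.mul_left_anticomm_of_odd hω K.ρ_mem_superGr,
    K.mul_left_anticomm_of_odd hω K.T_mem_superGr, ← mul_assoc K.ω (P - K.W), hωP, mul_assoc,
    hXQ, hXR, hQR, hRR, mul_zero, neg_zero, add_zero]

theorem D_add_half_br_self_of_mem_adjoin {S : Set F} (hS : S ⊆ K.gr 1)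
    (hinert : ∀ s ∈ S, (∀ x : F, K.br s x = 0) ∧ (∀ x : F, K.br x s = 0) ∧ K.D s = 0)
    {C P Q R Γ : F} (hΓ : Γ = C + K.ρ * P + K.T * Q + K.ρ * (K.T * R))
    (hmem : ∀ z ∈ ({C, P, Q, R} : Set F), z ∈ Algebra.adjoin ℂ (insert K.ω (insert K.W S)))
    (hP : P ∈ K.superGr 1) (hQ : Q ∈ K.superGr 1) (hR : R ∈ K.superGr 0) :
    K.D Γ + (1 / 2 : ℂ) • K.br Γ Γ = (I / 2) • (K.ω * ((P - K.W) * Q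
      + K.ρ * ((P - K.W) * R) + K.T * (Q * R) + K.ρ * (K.T * (R * R)))) := by
  set G := insert K.ω (insert K.W S)
  set A := insert K.T (insert K.ρ G)
  have hG : G ⊆ K.homogeneous := by
    rintro s (rfl | rfl | hs)
    exacts [⟨1, K.ω_mem⟩, ⟨1, K.W_mem⟩, ⟨1, hS hs⟩]
  have hA : A ⊆ K.homogeneous := by
    rintro s (rfl | rfl | hs)
    exacts [⟨1, K.T_mem⟩, ⟨1, K.ρ_mem⟩, hG hs]
  have hGA : Algebra.adjoin ℂ G ≤ Algebra.adjoin ℂ A :=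
    Algebra.adjoin_mono ((Set.subset_insert _ _).trans (Set.subset_insert _ _))
  have hTA : K.T ∈ Algebra.adjoin ℂ A := Algebra.subset_adjoin (by simp [A])
  have hρA : K.ρ ∈ Algebra.adjoin ℂ A := Algebra.subset_adjoin (by simp [A])
  have hΓA : Γ ∈ Algebra.adjoin ℂ A := by
    rw [hΓ]
    refine add_mem (add_mem (add_mem ?_ (mul_mem hρA ?_)) (mul_mem hTA ?_))
      (mul_mem hρA (mul_mem hTA ?_)) <;> exact hGA (hmem _ (by simp))
  refine K.D_add_half_br_self_of_decomp hΓ hP hQ hR fun z hz => ?_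
  have hz := hmem z hz
  have hgz : ∀ {g : F}, g ∈ Algebra.adjoin ℂ A → K.br g z = 0 := fun hg =>
    K.br_eq_zero_of_mem_adjoin hA hG (fun g hg s hs => (K.br_eq_zero_of_mem_gens hinert hs hg).2)
      hg hz
  refine ⟨hgz hTA, hgz hρA, K.br_eq_zero_of_mem_adjoin hG hA
    (fun s hs g hg => (K.br_eq_zero_of_mem_gens hinert hs hg).1) hz hΓA,
    K.D_eq_zero_of_mem_adjoin hG ?_ hz⟩
  rintro s (rfl | rfl | hs)
  exacts [K.D_ω, K.D_W, (hinert s hs).2.2]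

section Coefficients

variable (t0 t1 t2 t3 t4 t5 : ℂ)

def coeffC (s1 s2 : F) : F := algebraMap ℂ F t0 + s1 * K.ω + s2 * K.W

def coeffP (s0 : F) : F := -t1 • K.ω + t2 • K.W - s0

noncomputable def coeffQ (s0 s4 : F) : F :=
  -t3 • K.ω + t4 • K.W + (t4 / (1 - t2)) • s0 + s4 * (K.ω * K.W)

noncomputable def coeffR (s0 s3 s5 : F) : F :=
  t5 • (K.ω * K.W) + s3 * K.W + s5 * K.ω - (1 / (1 - t2)) • (s0 * s3)

variable {s0 s1 s2 s3 s4 s5 : F}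

theorem eq_coeff_decomp (hs0 : s0 ∈ K.gr 1) (hs3 : s3 ∈ K.gr 1) (hs4 : s4 ∈ K.gr 1)
    (hs5 : s5 ∈ K.gr 1) :
    algebraMap ℂ F t0 + t1 • (K.ω * K.ρ) + t2 • (K.ρ * K.W)
      + t3 • (K.ω * K.T) + t4 • (K.T * K.W) + t5 • (K.ω * (K.ρ * (K.T * K.W)))
      + s0 * K.ρ + s1 * K.ω + s2 * K.W + s3 * (K.ρ * (K.T * K.W))
      + s4 * (K.ω * (K.T * K.W)) + s5 * (K.ω * (K.ρ * K.T))
      - (t4 / (1 - t2)) • (s0 * K.T)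
      - (1 / (1 - t2)) • (s0 * (s3 * (K.ρ * K.T)))
    = K.coeffC t0 s1 s2 + K.ρ * K.coeffP t1 t2 s0 + K.T * K.coeffQ t2 t3 t4 s0 s4
      + K.ρ * (K.T * K.coeffR t2 t5 s0 s3 s5) := by
  have hρ := K.ρ_mem_superGr
  have hT := K.T_mem_superGr
  have hω := K.ω_mem_superGr
  have h0 := K.mem_superGr_of_mem_gr hs0
  have h3 := K.mem_superGr_of_mem_gr hs3
  have h4 := K.mem_superGr_of_mem_gr hs4
  have h5 := K.mem_superGr_of_mem_gr hs5
  simp only [coeffC, coeffP, coeffQ, coeffR, mul_add, mul_sub, mul_smul_comm, mul_neg,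
    K.mul_anticomm_of_odd hρ hω, K.mul_anticomm_of_odd hρ h0, K.mul_anticomm_of_odd hT hω,
    K.mul_anticomm_of_odd hT h0, K.mul_anticomm_of_odd hT h3,
    K.mul_left_anticomm_of_odd hT hω, K.mul_left_anticomm_of_odd hT h0,
    K.mul_left_anticomm_of_odd hT h3, K.mul_left_anticomm_of_odd hT h4,
    K.mul_left_anticomm_of_odd hT h5, K.mul_left_anticomm_of_odd hρ hω,
    K.mul_left_anticomm_of_odd hρ h0, K.mul_left_anticomm_of_odd hρ h3,
    K.mul_left_anticomm_of_odd hρ h5]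
  module

theorem coeffs_mem_adjoin :
    ∀ z ∈ ({K.coeffC t0 s1 s2, K.coeffP t1 t2 s0, K.coeffQ t2 t3 t4 s0 s4,
      K.coeffR t2 t5 s0 s3 s5} : Set F),
      z ∈ Algebra.adjoin ℂ (insert K.ω (insert K.W {s0, s1, s2, s3, s4, s5})) := by
  have gen {a : F} (ha : a ∈ insert K.ω (insert K.W {s0, s1, s2, s3, s4, s5})) :
      a ∈ Algebra.adjoin ℂ (insert K.ω (insert K.W {s0, s1, s2, s3, s4, s5})) :=
    Algebra.subset_adjoin ha
  have hω := gen (a := K.ω) (by simp)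
  have hW := gen (a := K.W) (by simp)
  rintro z (rfl | rfl | rfl | rfl)
  · exact add_mem (add_mem (Subalgebra.algebraMap_mem _ _) (mul_mem (gen (by simp)) hω))
      (mul_mem (gen (by simp)) hW)
  · exact sub_mem (add_mem (Subalgebra.smul_mem _ hω _) (Subalgebra.smul_mem _ hW _))
      (gen (by simp))
  · exact add_mem (add_mem (add_mem (Subalgebra.smul_mem _ hω _) (Subalgebra.smul_mem _ hW _))
      (Subalgebra.smul_mem _ (gen (by simp)) _)) (mul_mem (gen (by simp)) (mul_mem hω hW))
  · exact sub_mem (add_mem (add_mem (Subalgebra.smul_mem _ (mul_mem hω hW) _)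
      (mul_mem (gen (by simp)) hW)) (mul_mem (gen (by simp)) hω))
      (Subalgebra.smul_mem _ (mul_mem (gen (by simp)) (gen (by simp))) _)

theorem coeffP_mem_superGr (hs0 : s0 ∈ K.gr 1) : K.coeffP t1 t2 s0 ∈ K.superGr 1 :=
  sub_mem (add_mem (Submodule.smul_mem _ _ K.ω_mem_superGr)
    (Submodule.smul_mem _ _ K.W_mem_superGr)) (K.mem_superGr_of_mem_gr hs0)

theorem coeffQ_mem_superGr (hs0 : s0 ∈ K.gr 1) (hs4 : s4 ∈ K.gr 1) :
    K.coeffQ t2 t3 t4 s0 s4 ∈ K.superGr 1 :=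
  add_mem (add_mem (add_mem (Submodule.smul_mem _ _ K.ω_mem_superGr)
    (Submodule.smul_mem _ _ K.W_mem_superGr))
      (Submodule.smul_mem _ _ (K.mem_superGr_of_mem_gr hs0)))
    (K.gr_le_superGr 1 1 (K.mul_mem hs4 (K.mul_mem K.ω_mem K.W_mem) : _ ∈ K.gr 3))

theorem coeffR_mem_superGr (hs0 : s0 ∈ K.gr 1) (hs3 : s3 ∈ K.gr 1) (hs5 : s5 ∈ K.gr 1) :
    K.coeffR t2 t5 s0 s3 s5 ∈ K.superGr 0 := by
  have even {a b : F} (ha : a ∈ K.gr 1) (hb : b ∈ K.gr 1) : a * b ∈ K.superGr 0 :=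
    K.gr_le_superGr 1 0 (K.mul_mem ha hb : _ ∈ K.gr 2)
  exact sub_mem (add_mem (add_mem (Submodule.smul_mem _ _ (even K.ω_mem K.W_mem))
    (even hs3 K.W_mem)) (even hs5 K.ω_mem)) (Submodule.smul_mem _ _ (even hs0 hs3))

theorem ω_mul_coeffP_sub_W :
    K.ω * (K.coeffP t1 t2 s0 - K.W) = K.ω * ((t2 - 1) • K.W - s0) := by
  simp only [coeffP, mul_sub, mul_add, mul_smul_comm,
    K.mul_self_eq_zero_of_odd K.ω_mem_superGr]
  module

theorem ω_mul_coeffQ (ht2 : 1 - t2 ≠ 0) (hs4 : s4 ∈ K.gr 1) :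
    K.ω * K.coeffQ t2 t3 t4 s0 s4 = -(t4 / (1 - t2)) • (K.ω * ((t2 - 1) • K.W - s0)) := by
  simp only [coeffQ, mul_sub, mul_add, mul_smul_comm, K.mul_self_eq_zero_of_odd K.ω_mem_superGr,
    K.mul_left_anticomm_of_odd K.ω_mem_superGr (K.mem_superGr_of_mem_gr hs4), K.ω_mul_ω_mul,
    mul_zero, neg_zero, smul_zero]
  match_scalars <;> field_simp
  ring

theorem ω_mul_coeffR (ht2 : 1 - t2 ≠ 0) (hs3 : s3 ∈ K.gr 1) (hs5 : s5 ∈ K.gr 1) :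
    K.ω * K.coeffR t2 t5 s0 s3 s5 = (1 / (1 - t2)) • (K.ω * (((t2 - 1) • K.W - s0) * s3)) := by
  simp only [coeffR, mul_sub, sub_mul, mul_add, mul_smul_comm, smul_mul_assoc,
    K.mul_self_eq_zero_of_odd K.ω_mem_superGr,
    K.mul_left_anticomm_of_odd K.ω_mem_superGr (K.mem_superGr_of_mem_gr hs5), K.ω_mul_ω_mul,
    K.mul_anticomm_of_odd K.W_mem_superGr (K.mem_superGr_of_mem_gr hs3), mul_zero, neg_zero,
    smul_zero, mul_neg]
  match_scalars <;> field_simp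
  ring

end Coefficients

end KodairaGA

/-- Extended Maurer-Cartan equation for the Kodaira surface.  Work in the Kodaira
Gerstenhaber algebra enlarged by odd (anticommuting, degree-one) parameters
`s₀,…,s₅` which are killed by the bracket and the differential, with even complex
parameters `t₀,…,t₅`, `|t₂| < 1`.  For
`Γ = Γ₁ - (s₀t₄/(1-t₂)) T - (s₀s₃/(1-t₂)) ρ̄∧T`, where
`Γ₁ = t₀ + t₁ ω̄∧ρ̄ + t₂ ρ̄∧W + t₃ ω̄∧T + t₄ T∧W + t₅ ω̄∧ρ̄∧T∧W + s₀ρ̄ + s₁ω̄ + s₂W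
+ s₃ ρ̄∧T∧W + s₄ ω̄∧T∧W + s₅ ω̄∧ρ̄∧T`, one has
`∂̄Γ + (1/2)[Γ,Γ] = (i/2)(s₀²t₄/(1-t₂)) ω̄ + (i/2)(s₀²s₃/(1-t₂)) ω̄∧ρ̄
+ i(s₀s₃²/(1-t₂)) ω̄∧ρ̄∧T∧W - (i/2)(s₀²t₄s₃/(1-t₂)²) ω̄∧T`,
i.e. `∂̄Γ + ∂⃗Γ + (1/2)[Γ,Γ] = 0` with the Chen vector field `∂⃗` of the paper. -/
theorem stmt16 {F : Type*} [Ring F] [Algebra ℂ F] (K : KodairaGA F)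
    (s0 s1 s2 s3 s4 s5 : F)
    (hs0 : s0 ∈ K.gr 1) (hs1 : s1 ∈ K.gr 1) (hs2 : s2 ∈ K.gr 1)
    (hs3 : s3 ∈ K.gr 1) (hs4 : s4 ∈ K.gr 1) (hs5 : s5 ∈ K.gr 1)
    (hbrs : ∀ s ∈ ({s0, s1, s2, s3, s4, s5} : Set F),
      (∀ x : F, K.br s x = 0) ∧ (∀ x : F, K.br x s = 0) ∧ K.D s = 0)
    (t0 t1 t2 t3 t4 t5 : ℂ) (ht2 : ‖t2‖ < 1)
    (Γ : F)
    (hΓ : Γ = algebraMap ℂ F t0 + t1 • (K.ω * K.ρ) + t2 • (K.ρ * K.W)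
      + t3 • (K.ω * K.T) + t4 • (K.T * K.W) + t5 • (K.ω * (K.ρ * (K.T * K.W)))
      + s0 * K.ρ + s1 * K.ω + s2 * K.W + s3 * (K.ρ * (K.T * K.W))
      + s4 * (K.ω * (K.T * K.W)) + s5 * (K.ω * (K.ρ * K.T))
      - (t4 / (1 - t2)) • (s0 * K.T)
      - (1 / (1 - t2)) • (s0 * (s3 * (K.ρ * K.T)))) :
    K.D Γ + (1/2 : ℂ) • K.br Γ Γ
      = (Complex.I/2 * (t4 / (1 - t2))) • (s0 * s0 * K.ω)
        + (Complex.I/2 * (1 / (1 - t2))) • (s0 * s0 * (s3 * (K.ω * K.ρ)))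
        + (Complex.I * (1 / (1 - t2))) • (s0 * (s3 * (s3 *
            (K.ω * (K.ρ * (K.T * K.W))))))
        - (Complex.I/2 * (t4 / (1 - t2) ^ 2)) • (s0 * (s0 * (s3 * (K.ω * K.T)))) := by
  have ht2' : (1 : ℂ) - t2 ≠ 0 := sub_ne_zero.2 fun h => by simp [← h] at ht2
  have odd {a : F} (ha : a ∈ K.gr 1) := K.mem_superGr_of_mem_gr ha
  have hS : ({s0, s1, s2, s3, s4, s5} : Set F) ⊆ K.gr 1 := by
    simp [Set.insert_subset_iff, hs0, hs1, hs2, hs3, hs4, hs5]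
  rw [K.eq_coeff_decomp t0 t1 t2 t3 t4 t5 hs0 hs3 hs4 hs5] at hΓ
  rw [K.D_add_half_br_self_of_mem_adjoin hS hbrs hΓ (K.coeffs_mem_adjoin _ _ _ _ _ _)
      (K.coeffP_mem_superGr _ _ hs0) (K.coeffQ_mem_superGr _ _ _ hs0 hs4)
      (K.coeffR_mem_superGr _ _ hs0 hs3 hs5),
    K.ω_mul_residue_eq_zero (sub_mem (Submodule.smul_mem _ _ K.W_mem_superGr) (odd hs0))
      (odd hs3) (K.coeffR_mem_superGr _ _ hs0 hs3 hs5) (K.ω_mul_coeffP_sub_W _ _)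
      (K.ω_mul_coeffQ _ _ _ ht2' hs4) (K.ω_mul_coeffR _ _ ht2' hs3 hs5)]
  have hs0s0 : s0 * s0 = 0 := K.mul_self_eq_zero_of_odd (odd hs0)
  have hs3s3 (x : F) : s3 * (s3 * x) = 0 := by
    rw [← mul_assoc, K.mul_self_eq_zero_of_odd (odd hs3), zero_mul]
  simp [hs0s0, hs3s3, ← mul_assoc s0 s0]
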